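/- For each n ∈ ℕ define the convex functions f_{1,n}(x) = |x| and f_{2,n}(x) = (1/2)|x − 1/n| + (1/2)|x + 1/n| on ℝ, and let O = ℝ. Then with d₁(∂f₁, ∂f₂) = sup_{x ∈ O} H(∂f₁(x), ∂f₂(x)) and d₂(∂f₁, ∂f₂) = H(gph_O ∂f₁, gph_O ∂f₂), one has d₁(∂f_{1,n}, ∂f_{2,n}) = 1 and d₂(∂f_{1,n}, ∂f_{2,n}) = 1/n for every n; consequently d₂(∂f_{1,n}, ∂f_{2,n}) → 0 while d₁(∂f_{1,n}, ∂f_{2,n}) → 1, so the two metrics are not equivalent. -/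

import Mathlib

open MeasureTheory Metric Set Filter
open scoped InnerProductSpace ENNReal NNReal Topology

noncomputable section

variable {E : Type*} [NormedAddCommGroup E] [InnerProductSpace ℝ E]

/-- The Fréchet subdifferential of a real-valued function `f` at `x`. -/
def fsubdiff (f : E → ℝ) (x : E) : Set E :=
  {g | ∀ ε > 0, ∀ᶠ y in nhds x, f x + ⟪g, y - x⟫_ℝ - ε * ‖y - x‖ ≤ f y}

/-- The graph `gph_ℝ ∂f = {(x, y) : y ∈ ∂f(x)}` of the subdifferential mapping of
`f : ℝ → ℝ`, inside `ℝ × ℝ ≅ ℝ²` with the Euclidean (ℓ²) product distance. -/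
def sgraph (f : ℝ → ℝ) : Set (WithLp 2 (ℝ × ℝ)) :=
  {p | ((WithLp.equiv 2 (ℝ × ℝ)) p).2 ∈ fsubdiff f ((WithLp.equiv 2 (ℝ × ℝ)) p).1}

/-- `f_{1,n}(x) = |x|`. -/
def f1 : ℝ → ℝ := fun x => |x|

/-- `f_{2,n}(x) = (1/2)|x - 1/n| + (1/2)|x + 1/n|`. -/
def f2 (n : ℕ) : ℝ → ℝ := fun x => (1 / 2) * |x - 1 / (n : ℝ)| + (1 / 2) * |x + 1 / (n : ℝ)|

/-- `d₁(∂f₁, ∂f_{2,n}) = sup_{x ∈ ℝ} H(∂f₁(x), ∂f_{2,n}(x))`. -/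
def d1 (n : ℕ) : ℝ≥0∞ :=
  ⨆ x : ℝ, EMetric.hausdorffEdist (fsubdiff f1 x) (fsubdiff (f2 n) x)

/-- `d₂(∂f₁, ∂f_{2,n}) = H(gph ∂f₁, gph ∂f_{2,n})`. -/
def d2 (n : ℕ) : ℝ≥0∞ := EMetric.hausdorffEdist (sgraph f1) (sgraph (f2 n))

/-!
On `ℝ`, a function that is affine with slope `b` to the left of `x` and with slope `a` to the
right has Fréchet subdifferential `[b, a]` at `x`. This computes `∂f₁` and `∂f_{2,n}` everywhere:
`f_{2,n}` is `|x|` with its kink replaced by the flat piece `1/n` on `[-1/n, 1/n]`. Pointwise the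
two subdifferentials are at Hausdorff distance at most `1`, with equality on `(0, 1/n)`, where
they are `{1}` and `{0}`. The graphs are much closer: every point of one graph is joined to a
point of the other with the same subgradient by a horizontal segment of length at most `1/n`,
while the corner `(0, 1)` of `gph ∂f₁` is at distance at least `1/n` from `gph ∂f_{2,n}`.
-/

section FrechetOnReal

variable {f : ℝ → ℝ} {x g : ℝ}

theorem le_of_mem_fsubdiff_of_nhdsGT {a : ℝ} (hg : g ∈ fsubdiff f x)
    (hf : ∀ᶠ y in 𝓝[>] x, f y ≤ f x + a * (y - x)) : g ≤ a := by
  refine le_of_forall_pos_le_add fun ε hε => ?_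
  obtain ⟨y, hyx, hy, hfy⟩ :=
    (eventually_mem_nhdsWithin.and (((hg ε hε).filter_mono nhdsWithin_le_nhds).and hf)).exists
  rw [Real.inner_apply, Real.norm_eq_abs, abs_of_pos (sub_pos.2 (mem_Ioi.1 hyx))] at hy
  nlinarith [mem_Ioi.1 hyx]

theorem le_of_mem_fsubdiff_of_nhdsLT {b : ℝ} (hg : g ∈ fsubdiff f x)
    (hf : ∀ᶠ y in 𝓝[<] x, f y ≤ f x + b * (y - x)) : b ≤ g := by
  refine le_of_forall_pos_le_add fun ε hε => ?_
  obtain ⟨y, hyx, hy, hfy⟩ :=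
    (eventually_mem_nhdsWithin.and (((hg ε hε).filter_mono nhdsWithin_le_nhds).and hf)).exists
  rw [Real.inner_apply, Real.norm_eq_abs, abs_of_neg (sub_neg.2 (mem_Iio.1 hyx))] at hy
  nlinarith [mem_Iio.1 hyx]

theorem fsubdiff_eq_Icc {a b : ℝ} (hr : ∀ᶠ y in 𝓝[≥] x, f y = f x + a * (y - x))
    (hl : ∀ᶠ y in 𝓝[≤] x, f y = f x + b * (y - x)) : fsubdiff f x = Icc b a := by
  ext g
  refine ⟨fun hg => ⟨?_, ?_⟩, fun ⟨hbg, hga⟩ ε hε => ?_⟩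
  · exact le_of_mem_fsubdiff_of_nhdsLT hg <|
      (hl.filter_mono (nhdsWithin_mono _ Iio_subset_Iic_self)).mono fun y hy => hy.le
  · exact le_of_mem_fsubdiff_of_nhdsGT hg <|
      (hr.filter_mono (nhdsWithin_mono _ Ioi_subset_Ici_self)).mono fun y hy => hy.le
  rw [← nhdsLE_sup_nhdsGE, eventually_sup]
  constructor
  · filter_upwards [hl, self_mem_nhdsWithin] with y hy (hyx : y ≤ x)
    rw [hy, Real.inner_apply, Real.norm_eq_abs, abs_of_nonpos (sub_nonpos.2 hyx)]
    nlinarith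
  · filter_upwards [hr, self_mem_nhdsWithin] with y hy (hyx : x ≤ y)
    rw [hy, Real.inner_apply, Real.norm_eq_abs, abs_of_nonneg (sub_nonneg.2 hyx)]
    nlinarith

theorem fsubdiff_eq_singleton {a : ℝ} (hf : ∀ᶠ y in 𝓝 x, f y = f x + a * (y - x)) :
    fsubdiff f x = {a} := by
  rw [← Icc_self]
  exact fsubdiff_eq_Icc (hf.filter_mono nhdsWithin_le_nhds) (hf.filter_mono nhdsWithin_le_nhds)

end FrechetOnReal

theorem fsubdiff_f1_of_pos {x : ℝ} (hx : 0 < x) : fsubdiff f1 x = {1} := by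
  refine fsubdiff_eq_singleton ((eventually_gt_nhds hx).mono fun y hy => ?_)
  simp only [f1, abs_of_pos hx, abs_of_pos hy]
  ring

theorem fsubdiff_f1_of_neg {x : ℝ} (hx : x < 0) : fsubdiff f1 x = {-1} := by
  refine fsubdiff_eq_singleton ((eventually_lt_nhds hx).mono fun y hy => ?_)
  simp only [f1, abs_of_neg hx, abs_of_neg hy]
  ring

theorem fsubdiff_f1_zero : fsubdiff f1 0 = Icc (-1) 1 := by
  refine fsubdiff_eq_Icc ?_ ?_
  · filter_upwards [self_mem_nhdsWithin] with y (hy : 0 ≤ y)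
    simp [f1, abs_of_nonneg hy]
  · filter_upwards [self_mem_nhdsWithin] with y (hy : y ≤ 0)
    simp [f1, abs_of_nonpos hy]

section F2

variable {n : ℕ} {x : ℝ}

theorem f2_of_le_neg (hx : x ≤ -(1 / (n : ℝ))) : f2 n x = -x := by
  have : 0 ≤ 1 / (n : ℝ) := by positivity
  simp only [f2, abs_of_nonpos (by linarith : x - 1 / (n : ℝ) ≤ 0),
    abs_of_nonpos (by linarith : x + 1 / (n : ℝ) ≤ 0)]
  ring

theorem f2_of_mem_Icc (hx : x ∈ Icc (-(1 / (n : ℝ))) (1 / n)) : f2 n x = 1 / n := by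
  simp only [f2, abs_of_nonpos (by linarith [hx.2] : x - 1 / (n : ℝ) ≤ 0),
    abs_of_nonneg (by linarith [hx.1] : 0 ≤ x + 1 / (n : ℝ))]
  ring

theorem f2_of_ge (hx : 1 / (n : ℝ) ≤ x) : f2 n x = x := by
  have : 0 ≤ 1 / (n : ℝ) := by positivity
  simp only [f2, abs_of_nonneg (by linarith : 0 ≤ x - 1 / (n : ℝ)),
    abs_of_nonneg (by linarith : 0 ≤ x + 1 / (n : ℝ))]
  ring

theorem fsubdiff_f2_of_lt_neg (hx : x < -(1 / (n : ℝ))) : fsubdiff (f2 n) x = {-1} := by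
  refine fsubdiff_eq_singleton ((eventually_lt_nhds hx).mono fun y hy => ?_)
  rw [f2_of_le_neg hy.le, f2_of_le_neg hx.le]
  ring

theorem fsubdiff_f2_of_mem_Ioo (hx : x ∈ Ioo (-(1 / (n : ℝ))) (1 / n)) :
    fsubdiff (f2 n) x = {0} := by
  refine fsubdiff_eq_singleton ?_
  filter_upwards [Ioo_mem_nhds hx.1 hx.2] with y hy
  rw [f2_of_mem_Icc (Ioo_subset_Icc_self hy), f2_of_mem_Icc (Ioo_subset_Icc_self hx)]
  ring

theorem fsubdiff_f2_of_gt (hx : 1 / (n : ℝ) < x) : fsubdiff (f2 n) x = {1} := by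
  refine fsubdiff_eq_singleton ((eventually_gt_nhds hx).mono fun y hy => ?_)
  rw [f2_of_ge hy.le, f2_of_ge hx.le]
  ring

theorem fsubdiff_f2_neg_one_div (hn : 0 < n) : fsubdiff (f2 n) (-(1 / n)) = Icc (-1) 0 := by
  have hlt : -(1 / (n : ℝ)) < 1 / n := by linarith [show 0 < 1 / (n : ℝ) by positivity]
  refine fsubdiff_eq_Icc ?_ ?_
  · filter_upwards [Icc_mem_nhdsGE hlt] with y hy
    rw [f2_of_mem_Icc hy, f2_of_le_neg le_rfl]
    ring
  · filter_upwards [self_mem_nhdsWithin] with y (hy : y ≤ _)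
    rw [f2_of_le_neg hy, f2_of_le_neg le_rfl]
    ring

theorem fsubdiff_f2_one_div (hn : 0 < n) : fsubdiff (f2 n) (1 / n) = Icc 0 1 := by
  have hlt : -(1 / (n : ℝ)) < 1 / n := by linarith [show 0 < 1 / (n : ℝ) by positivity]
  refine fsubdiff_eq_Icc ?_ ?_
  · filter_upwards [self_mem_nhdsWithin] with y (hy : _ ≤ y)
    rw [f2_of_ge hy, f2_of_ge le_rfl]
    ring
  · filter_upwards [Icc_mem_nhdsLE hlt] with y hy
    rw [f2_of_mem_Icc hy, f2_of_ge le_rfl]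
    ring

end F2

theorem hausdorffEDist_le_of_subset_Icc {s t : Set ℝ} {a b : ℝ} (hs : s.Nonempty)
    (ht : t.Nonempty) (hsab : s ⊆ Icc a b) (htab : t ⊆ Icc a b) :
    hausdorffEDist s t ≤ ENNReal.ofReal (b - a) :=
  (hausdorffEDist_le_ediam hs ht).trans (Real.ediam_Icc a b ▸ ediam_mono (union_subset hsab htab))

section D1

variable {n : ℕ}

theorem hausdorffEDist_fsubdiff_f1_f2_le_one (hn : 0 < n) (x : ℝ) :
    hausdorffEDist (fsubdiff f1 x) (fsubdiff (f2 n) x) ≤ 1 := by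
  have hc : 0 < 1 / (n : ℝ) := by positivity
  rcases lt_trichotomy x 0 with hx | rfl | hx
  · have key : ∀ t : Set ℝ, t.Nonempty → t ⊆ Icc (-1) 0 → hausdorffEDist {-1} t ≤ 1 :=
      fun t ht hsub => by
        simpa using hausdorffEDist_le_of_subset_Icc (singleton_nonempty _) ht (by simp) hsub
    rw [fsubdiff_f1_of_neg hx]
    rcases lt_trichotomy x (-(1 / n)) with h | rfl | h
    · rw [fsubdiff_f2_of_lt_neg h]
      exact key _ (by simp) (by simp)
    · rw [fsubdiff_f2_neg_one_div hn]
      exact key _ (by simp) subset_rfl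
    · rw [fsubdiff_f2_of_mem_Ioo ⟨h, hx.trans hc⟩]
      exact key _ (by simp) (by simp)
  · rw [fsubdiff_f1_zero, fsubdiff_f2_of_mem_Ioo ⟨neg_lt_zero.2 hc, hc⟩]
    refine hausdorffEDist_le_of_mem_edist (fun a ha => ⟨0, rfl, ?_⟩) ?_
    · rw [edist_dist, Real.dist_eq, sub_zero, ENNReal.ofReal_le_one, abs_le]
      exact ha
    · rintro _ rfl
      exact ⟨0, ⟨by norm_num, by norm_num⟩, by simp⟩
  · have key : ∀ t : Set ℝ, t.Nonempty → t ⊆ Icc 0 1 → hausdorffEDist {1} t ≤ 1 :=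
      fun t ht hsub => by
        simpa using hausdorffEDist_le_of_subset_Icc (singleton_nonempty _) ht (by simp) hsub
    rw [fsubdiff_f1_of_pos hx]
    rcases lt_trichotomy x (1 / n) with h | rfl | h
    · rw [fsubdiff_f2_of_mem_Ioo ⟨(neg_lt_zero.2 hc).trans hx, h⟩]
      exact key _ (by simp) (by simp)
    · rw [fsubdiff_f2_one_div hn]
      exact key _ (by simp) subset_rfl
    · rw [fsubdiff_f2_of_gt h]
      exact key _ (by simp) (by simp)

theorem d1_eq_one (hn : 0 < n) : d1 n = 1 := by
  have hc : 0 < 1 / (n : ℝ) := by positivity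
  refine le_antisymm (iSup_le (hausdorffEDist_fsubdiff_f1_f2_le_one hn)) ?_
  calc (1 : ℝ≥0∞)
      = hausdorffEDist (fsubdiff f1 (1 / n / 2)) (fsubdiff (f2 n) (1 / n / 2)) := by
        rw [fsubdiff_f1_of_pos (half_pos hc),
          fsubdiff_f2_of_mem_Ioo ⟨by linarith, by linarith⟩, hausdorffEDist_singleton]
        simp
    _ ≤ d1 n := le_iSup (fun x => hausdorffEDist (fsubdiff f1 x) (fsubdiff (f2 n) x)) _

end D1

section D2

open WithLp

theorem toLp_mem_sgraph {f : ℝ → ℝ} {x g : ℝ} : toLp 2 (x, g) ∈ sgraph f ↔ g ∈ fsubdiff f x :=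
  Iff.rfl

theorem edist_toLp_same_snd (x x' g : ℝ) : edist (toLp 2 (x, g)) (toLp 2 (x', g)) = edist x x' := by
  simp [edist_dist, prod_dist_eq_of_L2]

theorem hausdorffEDist_sgraph_le {f h : ℝ → ℝ} {r : ℝ}
    (hfh : ∀ x, ∀ g ∈ fsubdiff f x, ∃ x', |x - x'| ≤ r ∧ g ∈ fsubdiff h x')
    (hhf : ∀ x, ∀ g ∈ fsubdiff h x, ∃ x', |x - x'| ≤ r ∧ g ∈ fsubdiff f x') :
    hausdorffEDist (sgraph f) (sgraph h) ≤ ENNReal.ofReal r := by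
  have shift {k k' : ℝ → ℝ} (hk : ∀ x, ∀ g ∈ fsubdiff k x, ∃ x', |x - x'| ≤ r ∧ g ∈ fsubdiff k' x') :
      ∀ p ∈ sgraph k, ∃ q ∈ sgraph k', edist p q ≤ ENNReal.ofReal r := by
    rintro ⟨x, g⟩ hp
    obtain ⟨x', hxx', hg⟩ := hk x g hp
    refine ⟨toLp 2 (x', g), hg, ?_⟩
    rw [edist_toLp_same_snd, edist_dist, Real.dist_eq]
    exact ENNReal.ofReal_le_ofReal hxx'
  exact hausdorffEDist_le_of_mem_edist (shift hfh) (shift hhf)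

variable {n : ℕ}

theorem neg_one_mem_fsubdiff_f2 (hn : 0 < n) {x : ℝ} (hx : x ≤ -(1 / n)) :
    -1 ∈ fsubdiff (f2 n) x := by
  rcases hx.lt_or_eq with hx | rfl
  · rw [fsubdiff_f2_of_lt_neg hx]
    rfl
  · rw [fsubdiff_f2_neg_one_div hn]
    norm_num

theorem one_mem_fsubdiff_f2 (hn : 0 < n) {x : ℝ} (hx : 1 / n ≤ x) : 1 ∈ fsubdiff (f2 n) x := by
  rcases hx.lt_or_eq with hx | rfl
  · rw [fsubdiff_f2_of_gt hx]
    rfl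
  · rw [fsubdiff_f2_one_div hn]
    norm_num

theorem exists_mem_fsubdiff_f2_of_mem_fsubdiff_f1 (hn : 0 < n) {x g : ℝ}
    (hg : g ∈ fsubdiff f1 x) : ∃ x', |x - x'| ≤ 1 / n ∧ g ∈ fsubdiff (f2 n) x' := by
  have hc : 0 < 1 / (n : ℝ) := by positivity
  rcases lt_trichotomy x 0 with hx | rfl | hx
  · rw [fsubdiff_f1_of_neg hx, mem_singleton_iff] at hg
    subst hg
    refine ⟨min x (-(1 / n)), ?_, neg_one_mem_fsubdiff_f2 hn (min_le_right _ _)⟩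
    rcases min_cases x (-(1 / (n : ℝ))) with ⟨h, h'⟩ | ⟨h, h'⟩ <;> rw [h, abs_le] <;>
      constructor <;> linarith
  · rw [fsubdiff_f1_zero] at hg
    rcases le_total g 0 with hg0 | hg0
    · refine ⟨-(1 / n), by simp, ?_⟩
      rw [fsubdiff_f2_neg_one_div hn]
      exact ⟨hg.1, hg0⟩
    · refine ⟨1 / n, by simp, ?_⟩
      rw [fsubdiff_f2_one_div hn]
      exact ⟨hg0, hg.2⟩
  · rw [fsubdiff_f1_of_pos hx, mem_singleton_iff] at hg
    subst hg
    refine ⟨max x (1 / n), ?_, one_mem_fsubdiff_f2 hn (le_max_right _ _)⟩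
    rcases max_cases x (1 / (n : ℝ)) with ⟨h, h'⟩ | ⟨h, h'⟩ <;> rw [h, abs_le] <;>
      constructor <;> linarith

theorem exists_mem_fsubdiff_f1_of_mem_fsubdiff_f2 (hn : 0 < n) {x g : ℝ}
    (hg : g ∈ fsubdiff (f2 n) x) : ∃ x', |x - x'| ≤ 1 / n ∧ g ∈ fsubdiff f1 x' := by
  have hc : 0 < 1 / (n : ℝ) := by positivity
  rcases lt_or_ge x (-(1 / (n : ℝ))) with hx | hx
  · rw [fsubdiff_f2_of_lt_neg hx] at hg
    exact ⟨x, by simp, by rwa [fsubdiff_f1_of_neg (by linarith)]⟩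
  rcases lt_or_ge (1 / (n : ℝ)) x with hx' | hx'
  · rw [fsubdiff_f2_of_gt hx'] at hg
    exact ⟨x, by simp, by rwa [fsubdiff_f1_of_pos (by linarith)]⟩
  refine ⟨0, by rw [sub_zero, abs_le]; exact ⟨hx, hx'⟩, ?_⟩
  rw [fsubdiff_f1_zero]
  rcases hx.eq_or_lt with rfl | hx
  · rw [fsubdiff_f2_neg_one_div hn] at hg
    exact ⟨hg.1, hg.2.trans zero_le_one⟩
  rcases hx'.eq_or_lt with rfl | hx'
  · rw [fsubdiff_f2_one_div hn] at hg
    exact ⟨neg_one_lt_zero.le.trans hg.1, hg.2⟩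
  rw [fsubdiff_f2_of_mem_Ioo ⟨hx, hx'⟩, mem_singleton_iff] at hg
  norm_num [hg]

theorem one_div_le_hausdorffEDist_sgraph (hn : 0 < n) :
    ENNReal.ofReal (1 / n) ≤ hausdorffEDist (sgraph f1) (sgraph (f2 n)) := by
  have hc1 : 1 / (n : ℝ) ≤ 1 := by
    rw [div_le_one (by exact_mod_cast hn)]
    exact_mod_cast hn
  have hcorner : toLp 2 ((0 : ℝ), (1 : ℝ)) ∈ sgraph f1 := by
    rw [toLp_mem_sgraph, fsubdiff_f1_zero]
    norm_num
  refine (le_infEDist.2 ?_).trans (infEDist_le_hausdorffEDist_of_mem hcorner)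
  rintro ⟨x, g⟩ hq
  by_cases hx : x ∈ Ioo (-(1 / (n : ℝ))) (1 / n)
  · rw [toLp_mem_sgraph, fsubdiff_f2_of_mem_Ioo hx, mem_singleton_iff] at hq
    subst hq
    calc ENNReal.ofReal (1 / n) ≤ edist (1 : ℝ) 0 := by simpa [edist_dist] using hc1
      _ ≤ _ := edist_snd_le _ _
  · calc ENNReal.ofReal (1 / n) ≤ edist (0 : ℝ) x := by
          rw [edist_dist, Real.dist_eq, zero_sub, abs_neg]
          refine ENNReal.ofReal_le_ofReal ?_
          rw [mem_Ioo, not_and_or, not_lt, not_lt] at hx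
          rcases hx with hx | hx
          · exact le_abs.2 (.inr (by linarith))
          · exact hx.trans (le_abs_self x)
      _ ≤ _ := edist_fst_le _ _

theorem d2_eq_one_div (hn : 0 < n) : d2 n = ENNReal.ofReal (1 / n) :=
  le_antisymm
    (hausdorffEDist_sgraph_le (fun _ _ => exists_mem_fsubdiff_f2_of_mem_fsubdiff_f1 hn)
      (fun _ _ => exists_mem_fsubdiff_f1_of_mem_fsubdiff_f2 hn))
    (one_div_le_hausdorffEDist_sgraph hn)

end D2

/-- For every `n ≥ 1`, `d₁(∂f_{1,n}, ∂f_{2,n}) = 1` and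
`d₂(∂f_{1,n}, ∂f_{2,n}) = 1/n`; consequently `d₂ → 0` while `d₁ → 1`, so the two
metrics are not equivalent. -/
theorem statement3 :
    (∀ n : ℕ, 0 < n → d1 n = 1 ∧ d2 n = ENNReal.ofReal (1 / (n : ℝ))) ∧
    Filter.Tendsto d2 Filter.atTop (nhds 0) ∧
    Filter.Tendsto d1 Filter.atTop (nhds 1) := by
  have hd1 : ∀ᶠ n : ℕ in atTop, 1 = d1 n := eventually_atTop.2 ⟨1, fun _ hn => (d1_eq_one hn).symm⟩
  have hd2 : ∀ᶠ n : ℕ in atTop, ENNReal.ofReal (1 / (n : ℝ)) = d2 n :=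
    eventually_atTop.2 ⟨1, fun _ hn => (d2_eq_one_div hn).symm⟩
  refine ⟨fun n hn => ⟨d1_eq_one hn, d2_eq_one_div hn⟩, ?_, tendsto_const_nhds.congr' hd1⟩
  simpa using (ENNReal.tendsto_ofReal tendsto_one_div_atTop_nhds_zero_nat).congr' hd2
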